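/- arXiv:2510.10038 — 4 statements merged into one kernel-verified Lean document; each statement's English description precedes it below -/
import Mathlib

section
/- Let T be a tree and l : V(T) → ℝ≥0 a vertex labeling. Define d_l(u,v) = 0 if u = v, and otherwise d_l(u,v) = the maximum of l(w) over all vertices w on the unique path in T joining u and v. Then d_l is an ultrametric on V(T) if and only if l is non-degenerate, i.e., max{l(u), l(v)} > 0 for every edge {u,v} of T. -/
open SimpleGraph

open scoped Classical in
/-- Distance induced by a vertex labeling on a tree. -/
noncomputable def treeDist {V : Type*} {G : SimpleGraph V} (hG : G.IsTree)
    (l : V → NNReal) (u v : V) : NNReal :=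
  if u = v then 0
  else (((hG.existsUnique_path u v).choose.support).map l).foldr max 0

/-- A labeling is non-degenerate if `max (l u) (l v) > 0` for every edge `{u, v}`. -/
def Nondeg {V : Type*} (G : SimpleGraph V) (l : V → NNReal) : Prop :=
  ∀ u v, G.Adj u v → 0 < max (l u) (l v)

/-- `d` is an ultrametric: symmetric, positive, and satisfies the strong triangle
inequality. -/
def IsUltrametric {X : Type*} (d : X → X → NNReal) : Prop :=
  (∀ x y, d x y = d y x) ∧ (∀ x y, (d x y = 0 ↔ x = y)) ∧
    (∀ x y z, d x y ≤ max (d x z) (d z y))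

private lemma mem_le_foldr_max (L : List NNReal) {a : NNReal} (ha : a ∈ L) :
    a ≤ L.foldr max 0 := by
  induction L with
  | nil => simp at ha
  | cons b t ih =>
    rcases List.mem_cons.1 ha with h | h
    · simp [h]
    · exact le_trans (ih h) (le_max_right _ _)

private lemma foldr_max_le (L : List NNReal) {c : NNReal} (h : ∀ a ∈ L, a ≤ c) :
    L.foldr max 0 ≤ c := by
  induction L with
  | nil => simp
  | cons b t ih =>
    simp only [List.foldr_cons, max_le_iff]
    exact ⟨h b (by simp), ih fun a ha => h a (by simp [ha])⟩

private lemma foldr_max_eq_of_mem_iff (L M : List NNReal)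
    (h : ∀ a, a ∈ L ↔ a ∈ M) : L.foldr max 0 = M.foldr max 0 :=
  le_antisymm (foldr_max_le _ fun a ha => mem_le_foldr_max _ ((h a).1 ha))
    (foldr_max_le _ fun a ha => mem_le_foldr_max _ ((h a).2 ha))

open scoped Classical in
private lemma treeDist_spec {V : Type*} {G : SimpleGraph V} (hG : G.IsTree)
    (l : V → NNReal) {u v : V} (huv : u ≠ v) {p : G.Walk u v} (hp : p.IsPath) :
    treeDist hG l u v = ((p.support.map l).foldr max 0) := by
  have h := (hG.existsUnique_path u v).choose_spec
  have hpe : p = (hG.existsUnique_path u v).choose := h.2 p hp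
  simp [treeDist, if_neg huv, ← hpe]

open scoped Classical in
theorem stmt_0 {V : Type*} {G : SimpleGraph V} (hG : G.IsTree) (l : V → NNReal) :
    IsUltrametric (treeDist hG l) ↔ Nondeg G l := by
  constructor
  · rintro ⟨-, hpos, -⟩ u v huv
    have hne : u ≠ v := huv.ne
    have hpath : (Walk.cons huv Walk.nil).IsPath := by
      simp [Walk.isPath_def, hne]
    have hd : treeDist hG l u v = max (l u) (l v) := by
      rw [treeDist_spec hG l hne hpath]
      simp [max_assoc]
    have : treeDist hG l u v ≠ 0 := fun h0 => hne ((hpos u v).1 h0)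
    rw [hd] at this
    exact zero_lt_iff.2 this
  · intro hnd
    refine ⟨?_, ?_, ?_⟩
    · intro x y
      by_cases hxy : x = y
      · simp [hxy]
      · have hyx : y ≠ x := fun h => hxy h.symm
        set p := (hG.existsUnique_path x y).choose with hp
        have hps := (hG.existsUnique_path x y).choose_spec.1
        rw [treeDist_spec hG l hxy hps, treeDist_spec hG l hyx hps.reverse]
        exact foldr_max_eq_of_mem_iff _ _ (by
          intro a
          simp [Walk.support_reverse])
    · intro x y
      constructor
      · intro h0
        by_contra hxy
        set p := (hG.existsUnique_path x y).choose with hp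
        have hps := (hG.existsUnique_path x y).choose_spec.1
        rw [treeDist_spec hG l hxy hps] at h0
        have hnn : ¬ p.Nil := fun h => hxy h.eq
        obtain ⟨w, hadj, q, hq⟩ := Walk.not_nil_iff.1 hnn
        have hx : l x ≤ (p.support.map l).foldr max 0 :=
          mem_le_foldr_max _ (List.mem_map_of_mem (f := l) p.start_mem_support)
        have hw : l w ≤ (p.support.map l).foldr max 0 := by
          refine mem_le_foldr_max _ (List.mem_map_of_mem (f := l) ?_)
          rw [hq]; simp
        rw [h0] at hx hw
        have hmax : max (l x) (l w) ≤ 0 := max_le hx hw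
        exact absurd (lt_of_lt_of_le (hnd x w hadj) hmax) (lt_irrefl 0)
      · intro h; simp [treeDist, h]
    · intro x y z
      by_cases hxy : x = y
      · simp [treeDist, hxy]
      by_cases hxz : x = z
      · subst hxz; simp [treeDist, if_pos rfl]
      by_cases hzy : z = y
      · subst hzy; simp [treeDist, if_pos rfl]
      · set p := (hG.existsUnique_path x z).choose with hp
        have hps := (hG.existsUnique_path x z).choose_spec.1
        set q := (hG.existsUnique_path z y).choose with hq
        have hqs := (hG.existsUnique_path z y).choose_spec.1
        set w : G.Walk x y := p.append q with hw
        rw [treeDist_spec hG l hxy w.bypass_isPath,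
          treeDist_spec hG l hxz hps, treeDist_spec hG l hzy hqs]
        refine foldr_max_le _ fun a ha => ?_
        obtain ⟨v, hv, rfl⟩ := List.mem_map.1 ha
        have hv' : v ∈ w.support := w.support_bypass_subset hv
        rw [hw, Walk.support_append, List.mem_append] at hv'
        rcases hv' with h | h
        · exact le_max_of_le_left (mem_le_foldr_max _ (List.mem_map_of_mem (f := l) h))
        · exact le_max_of_le_right (mem_le_foldr_max _
            (List.mem_map_of_mem (f := l) (List.mem_of_mem_tail h)))
end

section
/- An ultrametric space (X,d) is generated by a vertex labeling of a star graph (i.e., (X,d) ∈ US) if and only if there exists x₀ ∈ X such that d(x₀, x) ≤ d(y, x) holds for all x, y ∈ X with x ≠ y. -/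
open SimpleGraph

/-- `S` is a star graph with some center `c`: `c` is adjacent to every other
vertex and there are no other edges. -/
def IsStarGraph {W : Type*} (S : SimpleGraph W) : Prop :=
  ∃ c : W, ∀ a b : W, S.Adj a b ↔ ((a = c ∧ b ≠ c) ∨ (b = c ∧ a ≠ c))

section StarHelpers

variable {W : Type*} {S : SimpleGraph W} {c : W}

lemma star_adj_right (hc : ∀ a b : W, S.Adj a b ↔ ((a = c ∧ b ≠ c) ∨ (b = c ∧ a ≠ c)))
    {u w : W} (h : S.Adj u w) (hu : u ≠ c) : w = c := by
  rcases (hc u w).mp h with ⟨h1, _⟩ | ⟨h1, _⟩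
  · exact absurd h1 hu
  · exact h1

lemma star_adj_left (hc : ∀ a b : W, S.Adj a b ↔ ((a = c ∧ b ≠ c) ∨ (b = c ∧ a ≠ c)))
    {w : W} (h : S.Adj c w) : w ≠ c := by
  rcases (hc c w).mp h with ⟨_, h2⟩ | ⟨_, h2⟩
  · exact h2
  · exact absurd rfl h2

lemma star_walk_to_center (hc : ∀ a b : W, S.Adj a b ↔ ((a = c ∧ b ≠ c) ∨ (b = c ∧ a ≠ c)))
    {u : W} (hu : u ≠ c) (p : S.Walk u c) (hp : p.IsPath) :
    p = Walk.cons ((hc u c).mpr (Or.inr ⟨rfl, hu⟩)) Walk.nil := by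
  cases p with
  | nil => exact absurd rfl hu
  | @cons _ w _ h q =>
    obtain rfl := (star_adj_right hc h hu).symm
    rw [Walk.isPath_iff_eq_nil.mp hp.of_cons]

lemma star_walk_from_center (hc : ∀ a b : W, S.Adj a b ↔ ((a = c ∧ b ≠ c) ∨ (b = c ∧ a ≠ c)))
    {v : W} (hv : v ≠ c) (p : S.Walk c v) (hp : p.IsPath) :
    p = Walk.cons ((hc c v).mpr (Or.inl ⟨rfl, hv⟩)) Walk.nil := by
  cases p with
  | nil => exact absurd rfl hv
  | @cons _ w _ h q =>
    have hw : w ≠ c := star_adj_left hc h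
    cases q with
    | nil => rfl
    | @cons _ z _ h2 r =>
      obtain rfl := (star_adj_right hc h2 hw).symm
      exfalso
      have hmem : c ∈ r.support := r.start_mem_support
      have hnd := hp.support_nodup
      rw [Walk.support_cons, Walk.support_cons] at hnd
      exact (List.nodup_cons.mp hnd).1 (List.mem_cons.mpr (Or.inr hmem))

lemma star_walk_generic (hc : ∀ a b : W, S.Adj a b ↔ ((a = c ∧ b ≠ c) ∨ (b = c ∧ a ≠ c)))
    {u v : W} (hu : u ≠ c) (hv : v ≠ c) (huv : u ≠ v) (p : S.Walk u v) (hp : p.IsPath) :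
    p = Walk.cons ((hc u c).mpr (Or.inr ⟨rfl, hu⟩))
        (Walk.cons ((hc c v).mpr (Or.inl ⟨rfl, hv⟩)) Walk.nil) := by
  cases p with
  | nil => exact absurd rfl huv
  | @cons _ w _ h q =>
    obtain rfl := (star_adj_right hc h hu).symm
    rw [star_walk_from_center hc hv q hp.of_cons]

lemma star_isTree (hc : ∀ a b : W, S.Adj a b ↔ ((a = c ∧ b ≠ c) ∨ (b = c ∧ a ≠ c)))
    [Nonempty W] : S.IsTree := by
  rw [isTree_iff_existsUnique_path]
  refine ⟨‹_›, fun u v => ?_⟩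
  by_cases huv : u = v
  · subst huv
    exact ⟨Walk.nil, Walk.IsPath.nil, fun q hq => Walk.isPath_iff_eq_nil.mp hq⟩
  by_cases hu : u = c
  · subst hu
    have hvu : v ≠ u := fun h => huv h.symm
    refine ⟨Walk.cons ((hc u v).mpr (Or.inl ⟨rfl, hvu⟩)) Walk.nil, ?_, ?_⟩
    · simp [Walk.cons_isPath_iff, huv]
    · exact fun q hq => star_walk_from_center hc hvu q hq
  by_cases hv : v = c
  · subst hv
    refine ⟨Walk.cons ((hc u v).mpr (Or.inr ⟨rfl, hu⟩)) Walk.nil, ?_, ?_⟩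
    · simp [Walk.cons_isPath_iff, hu, huv]
    · exact fun q hq => star_walk_to_center hc hu q hq
  · refine ⟨Walk.cons ((hc u c).mpr (Or.inr ⟨rfl, hu⟩))
      (Walk.cons ((hc c v).mpr (Or.inl ⟨rfl, hv⟩)) Walk.nil), ?_, ?_⟩
    · simp [Walk.cons_isPath_iff, hu, hv, huv, Ne.symm hv]
    · exact fun q hq => star_walk_generic hc hu hv huv q hq

open scoped Classical in
lemma treeDist_star (hc : ∀ a b : W, S.Adj a b ↔ ((a = c ∧ b ≠ c) ∨ (b = c ∧ a ≠ c)))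
    (hT : S.IsTree) (l : W → NNReal) (u v : W) :
    treeDist hT l u v = if u = v then 0 else max (l u) (max (l c) (l v)) := by
  by_cases huv : u = v
  · simp [treeDist, huv]
  simp only [treeDist, if_neg huv]
  have hp := (hT.existsUnique_path u v).choose_spec.1
  by_cases hu : u = c
  · subst hu
    rw [star_walk_from_center hc (fun h => huv h.symm) _ hp]
    simp [max_assoc, max_comm, max_left_comm, max_self]
  by_cases hv : v = c
  · subst hv
    rw [star_walk_to_center hc hu _ hp]
    simp [max_assoc, max_comm, max_left_comm, max_self]
  · rw [star_walk_generic hc hu hv huv _ hp]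
    simp [max_assoc]

end StarHelpers

def starOf {X : Type*} (x₀ : X) : SimpleGraph X where
  Adj a b := (a = x₀ ∧ b ≠ x₀) ∨ (b = x₀ ∧ a ≠ x₀)
  symm := ⟨fun a b h => by tauto⟩
  loopless := ⟨fun a h => by tauto⟩

lemma starOf_adj {X : Type*} (x₀ a b : X) :
    (starOf x₀).Adj a b ↔ ((a = x₀ ∧ b ≠ x₀) ∨ (b = x₀ ∧ a ≠ x₀)) := Iff.rfl

theorem stmt_2 {X : Type u} (d : X → X → NNReal) (hd : IsUltrametric d) :
    (∃ (W : Type u) (S : SimpleGraph W) (hS : IsStarGraph S) (hT : S.IsTree)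
        (l : W → NNReal) (hl : Nondeg S l) (Φ : X ≃ W),
        ∀ x y : X, d x y = treeDist hT l (Φ x) (Φ y)) ↔
      (∃ x₀ : X, ∀ x y : X, x ≠ y → d x₀ x ≤ d y x) := by
  classical
  obtain ⟨hsymm, hzero, htri⟩ := hd
  constructor
  · rintro ⟨W, S, ⟨c, hc⟩, hT, l, hl, Φ, hΦ⟩
    refine ⟨Φ.symm c, fun x y hxy => ?_⟩
    have key : ∀ a b : X, d a b =
        if Φ a = Φ b then 0 else max (l (Φ a)) (max (l c) (l (Φ b))) := fun a b => by
      rw [hΦ, treeDist_star hc]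
    by_cases hx : x = Φ.symm c
    · subst hx
      have h0 : d (Φ.symm c) (Φ.symm c) = 0 := (hzero _ _).mpr rfl
      rw [h0]
      exact zero_le
    · have hΦx : Φ x ≠ c := fun h => hx (by rw [← h, Equiv.symm_apply_apply])
      rw [key, key, if_neg, if_neg]
      · rw [Equiv.apply_symm_apply]
        calc max (l c) (max (l c) (l (Φ x))) = max (l c) (l (Φ x)) := by
              rw [← max_assoc, max_self]
          _ ≤ max (l (Φ y)) (max (l c) (l (Φ x))) := le_max_right _ _
      · exact fun h => hxy (Φ.injective h).symm
      · rw [Equiv.apply_symm_apply]; exact Ne.symm hΦx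
  · rintro ⟨x₀, hx₀⟩
    haveI : Nonempty X := ⟨x₀⟩
    have hc := starOf_adj x₀
    have hT : (starOf x₀).IsTree := star_isTree hc
    refine ⟨X, starOf x₀, ⟨x₀, hc⟩, hT, fun x => d x₀ x, ?_, Equiv.refl X, fun x y => ?_⟩
    · rintro u v (⟨rfl, hv⟩ | ⟨rfl, hu⟩)
      · exact lt_max_of_lt_right (lt_of_le_of_ne zero_le (fun h => hv ((hzero _ _).mp h.symm).symm))
      · exact lt_max_of_lt_left (lt_of_le_of_ne zero_le (fun h => hu ((hzero _ _).mp h.symm).symm))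
    · rw [treeDist_star hc]
      simp only [Equiv.refl_apply]
      by_cases hxy : x = y
      · refine Eq.trans ?_ (ite_cond_eq_true _ _ (eq_true hxy)).symm; exact (hzero x y).mpr hxy
      · refine Eq.trans ?_ (ite_cond_eq_false _ _ (eq_false hxy)).symm
        have h0 : d x₀ x₀ = 0 := (hzero _ _).mpr rfl
        rw [h0]
        refine le_antisymm ?_ ?_
        · calc d x y ≤ max (d x x₀) (d x₀ y) := htri x y x₀
            _ ≤ max (d x₀ x) (max 0 (d x₀ y)) := by
                rw [hsymm x x₀]; exact max_le_max le_rfl (le_max_right _ _)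
        · refine max_le ?_ (max_le zero_le ?_)
          · rw [hsymm x₀ x] at *
            calc d x x₀ = d x₀ x := hsymm x x₀
              _ ≤ d y x := hx₀ x y hxy
              _ = d x y := hsymm y x
          · calc d x₀ y ≤ d x y := hx₀ y x (Ne.symm hxy)
end

section
/- Let T be a tree such that every ultrametric space generated by a non-degenerate vertex labeling of T lies in the class US. Then every path contained in T has length at most 3 (i.e., at most 3 edges). -/
open SimpleGraph

/-! A path `a b c d e` of length four gives a non-degenerate labeling with no centre: label
the ends `0`, their neighbours `b, d` by `1` and everything else by `2` (`a` and `e` are not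
adjacent in a tree). A centre `x₀` would satisfy `d(x₀, b) ≤ d(a, b) = 1` and
`d(x₀, d) ≤ d(e, d) = 1`, so by the ultrametric inequality `d(b, d) ≤ 1`, whereas the path
from `b` to `d` passes through `c`, of label `2`. -/

namespace SimpleGraph.IsTree

variable {V : Type*} {G : SimpleGraph V} (hG : G.IsTree) (l : V → NNReal)

theorem treeDist_le_of_walk {u v : V} (p : G.Walk u v) {c : NNReal}
    (hc : ∀ z ∈ p.support, l z ≤ c) : treeDist hG l u v ≤ c := by
  classical
  unfold treeDist
  split_ifs
  · exact zero_le
  rw [← (hG.existsUnique_path u v).choose_spec.2 _ p.bypass_isPath, ← bot_eq_zero']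
  refine List.max_le_of_forall_le _ _ fun y hy => ?_
  obtain ⟨z, hz, rfl⟩ := List.mem_map.1 hy
  exact hc z (p.support_bypass_subset_support hz)

theorem treeDist_le_max_of_adj {u v : V} (h : G.Adj u v) :
    treeDist hG l u v ≤ max (l u) (l v) :=
  hG.treeDist_le_of_walk l (.cons h .nil) fun z hz => by
    rcases (by simpa using hz : z = u ∨ z = v) with rfl | rfl
    exacts [le_max_left _ _, le_max_right _ _]

theorem le_treeDist_of_isPath {u v : V} (huv : u ≠ v) {p : G.Walk u v} (hp : p.IsPath)
    {z : V} (hz : z ∈ p.support) : l z ≤ treeDist hG l u v := by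
  unfold treeDist
  rw [if_neg huv, (hG.existsUnique_path u v).choose_spec.2 p hp |>.symm, ← bot_eq_zero']
  exact List.le_max_of_le (List.mem_map_of_mem hz) le_rfl

theorem treeDist_comm (u v : V) : treeDist hG l u v = treeDist hG l v u := by
  suffices h : ∀ u v, treeDist hG l u v ≤ treeDist hG l v u from le_antisymm (h u v) (h v u)
  intro u v
  rcases eq_or_ne v u with rfl | hvu
  · rfl
  obtain ⟨p, hp⟩ := (hG.existsUnique_path v u).exists
  refine hG.treeDist_le_of_walk l p.reverse fun z hz => ?_
  exact hG.le_treeDist_of_isPath l hvu hp (by simpa using hz)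

theorem treeDist_le_max (u v w : V) :
    treeDist hG l u w ≤ max (treeDist hG l u v) (treeDist hG l v w) := by
  rcases eq_or_ne u v with rfl | huv
  · exact le_max_right _ _
  rcases eq_or_ne v w with rfl | hvw
  · exact le_max_left _ _
  obtain ⟨p, hp⟩ := (hG.existsUnique_path u v).exists
  obtain ⟨q, hq⟩ := (hG.existsUnique_path v w).exists
  refine hG.treeDist_le_of_walk l (p.append q) fun z hz => ?_
  rcases (p.mem_support_append_iff q).1 hz with hz | hz
  · exact le_max_of_le_left (hG.le_treeDist_of_isPath l huv hp hz)
  · exact le_max_of_le_right (hG.le_treeDist_of_isPath l hvw hq hz)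

end SimpleGraph.IsTree

open scoped Classical in
noncomputable def pathLabel {V : Type*} (a b d e : V) (x : V) : NNReal :=
  if x = a ∨ x = e then 0 else if x = b ∨ x = d then 1 else 2

section pathLabel

variable {V : Type*} {a b d e x : V}

theorem pathLabel_pos (hx : ¬(x = a ∨ x = e)) : 0 < pathLabel a b d e x := by
  unfold pathLabel
  split_ifs <;> norm_num

theorem pathLabel_le_one (hx : x = a ∨ x = b ∨ x = d ∨ x = e) : pathLabel a b d e x ≤ 1 := by
  unfold pathLabel
  split_ifs
  · exact zero_le_one
  · exact le_rfl
  · tauto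

theorem pathLabel_eq_two (hx : ¬(x = a ∨ x = b ∨ x = d ∨ x = e)) : pathLabel a b d e x = 2 := by
  unfold pathLabel
  rw [if_neg (by tauto), if_neg (by tauto)]

theorem nondeg_pathLabel {G : SimpleGraph V} (hae : ¬G.Adj a e) :
    Nondeg G (pathLabel a b d e) := by
  intro u v huv
  by_cases hu : u = a ∨ u = e
  · by_cases hv : v = a ∨ v = e
    · rcases hu with rfl | rfl <;> rcases hv with rfl | rfl
      exacts [(G.irrefl huv).elim, (hae huv).elim, (hae huv.symm).elim, (G.irrefl huv).elim]
    · exact lt_max_of_lt_right (pathLabel_pos hv)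
  · exact lt_max_of_lt_left (pathLabel_pos hu)

end pathLabel

namespace SimpleGraph.IsTree

variable {V : Type*} {G : SimpleGraph V} (hG : G.IsTree)

theorem exists_nondeg_forall_exists_treeDist_lt {a b c d e : V} (hab : G.Adj a b)
    (hbc : G.Adj b c) (hcd : G.Adj c d) (hde : G.Adj d e) (hae : ¬G.Adj a e)
    (hca : c ≠ a) (hce : c ≠ e) (hbd : b ≠ d) :
    ∃ l, Nondeg G l ∧ ∀ x₀, ∃ x y, x ≠ y ∧ treeDist hG l y x < treeDist hG l x₀ x := by
  refine ⟨pathLabel a b d e, nondeg_pathLabel hae, fun x₀ => ?_⟩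
  by_contra! hx₀
  have hb : treeDist hG (pathLabel a b d e) x₀ b ≤ 1 :=
    ((hx₀ b a hab.ne').trans (hG.treeDist_le_max_of_adj _ hab)).trans
      (max_le (pathLabel_le_one (by simp)) (pathLabel_le_one (by simp)))
  have hd : treeDist hG (pathLabel a b d e) x₀ d ≤ 1 :=
    ((hx₀ d e hde.ne).trans (hG.treeDist_le_max_of_adj _ hde.symm)).trans
      (max_le (pathLabel_le_one (by simp)) (pathLabel_le_one (by simp)))
  have hbcd : (Walk.cons hbc (.cons hcd .nil)).IsPath := by simp [hbc.ne, hcd.ne, hbd]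
  have hc : pathLabel a b d e c = 2 := pathLabel_eq_two (by simp [hca, hbc.ne', hcd.ne, hce])
  have : (2 : NNReal) ≤ 1 := calc
    2 ≤ treeDist hG (pathLabel a b d e) b d := hc ▸ hG.le_treeDist_of_isPath _ hbd hbcd (by simp)
    _ ≤ max (treeDist hG _ b x₀) (treeDist hG _ x₀ d) := hG.treeDist_le_max _ b x₀ d
    _ ≤ 1 := max_le (hG.treeDist_comm _ b x₀ ▸ hb) hd
  norm_num at this

end SimpleGraph.IsTree

theorem stmt_5 {V : Type*} {G : SimpleGraph V} (hG : G.IsTree)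
    (hUS : ∀ l : V → NNReal, Nondeg G l →
        ∃ x₀ : V, ∀ x y : V, x ≠ y → treeDist hG l x₀ x ≤ treeDist hG l y x) :
    ∀ (u v : V) (p : G.Walk u v), p.IsPath → p.length ≤ 3 := by
  intro u v p hp
  by_contra! hlen
  have hne : ∀ i j : Fin 5, i ≠ j → p.getVert i ≠ p.getVert j := fun i j hij h =>
    hij (Fin.ext (hp.getVert_injOn (by simp; omega) (by simp; omega) h))
  have hadj : ∀ i : Fin 4, G.Adj (p.getVert i) (p.getVert (i + 1)) := fun i =>
    p.adj_getVert_succ (by omega)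
  have hnadj : ¬G.Adj (p.getVert 0) (p.getVert 4) := fun h =>
    hne 4 1 (by decide) <| hG.isAcyclic.eq_snd_of_adj_start hp (by rwa [p.getVert_zero] at h)
      (p.getVert_mem_support 4)
  obtain ⟨l, hl, hno⟩ := hG.exists_nondeg_forall_exists_treeDist_lt (hadj 0) (hadj 1) (hadj 2)
    (hadj 3) hnadj (hne 2 0 (by decide)) (hne 2 4 (by decide)) (hne 1 3 (by decide))
  obtain ⟨x₀, hx₀⟩ := hUS l hl
  obtain ⟨x, y, hxy, hlt⟩ := hno x₀
  exact (hx₀ x y hxy).not_gt hlt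
end

section
/- Let T be a tree with at most two vertices of degree ≥ 2, and let l : V(T) → ℝ≥0 be any non-degenerate labeling. Then the ultrametric space (V(T), d_l) admits a point x₀ with d_l(x₀, x) ≤ d_l(y, x) for all x ≠ y; in fact, if u, v are the (at most two) vertices of degree ≥ 2 satisfying l(u) ≤ l(v), then x₀ = u works (if no vertex has degree ≥ 2, any vertex works). -/
open SimpleGraph

/-- The vertex `u` has degree at least two: it has two distinct neighbors. -/
def DegGe2 {V : Type*} (G : SimpleGraph V) (u : V) : Prop :=
  ∃ a b : V, a ≠ b ∧ G.Adj u a ∧ G.Adj u b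

section Aux

variable {V : Type*} {G : SimpleGraph V}

lemma foldr_max_le_iff (s : List NNReal) (c : NNReal) :
    s.foldr max 0 ≤ c ↔ ∀ a ∈ s, a ≤ c := by
  induction s with
  | nil => simp
  | cons a t ih => simp [max_le_iff, ih]

lemma le_foldr_max {s : List NNReal} {a : NNReal} (h : a ∈ s) :
    a ≤ s.foldr max 0 := (foldr_max_le_iff s _).1 le_rfl a h

lemma treeDist_eq (hG : G.IsTree) (l : V → NNReal) {u v : V} (huv : u ≠ v)
    (p : G.Walk u v) (hp : p.IsPath) :
    treeDist hG l u v = (p.support.map l).foldr max 0 := by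
  have h : (hG.existsUnique_path u v).choose = p :=
    ((hG.existsUnique_path u v).choose_spec.2 p hp).symm
  rw [treeDist, if_neg huv, h]

/-- Key abstract lemma: if for each `x ≠ u` the distance from `u` is bounded
by `l x` or by `max (l c) (l x)` for the unique neighbor `c` of `x`, then `u`
minimizes distances. -/
lemma key (hG : G.IsTree) (l : V → NNReal) (u : V)
    (H : ∀ x, x ≠ u → treeDist hG l u x ≤ l x ∨
      ∃ c, G.Adj c x ∧ (∀ c', G.Adj c' x → c' = c) ∧
        treeDist hG l u x ≤ max (l c) (l x)) :
    ∀ x y : V, x ≠ y → treeDist hG l u x ≤ treeDist hG l y x := by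
  intro x y hxy
  by_cases hxu : x = u
  · subst hxu; simp [treeDist]
  obtain ⟨p, hp⟩ := (hG.existsUnique_path y x).exists
  rw [treeDist_eq hG l (Ne.symm hxy) p hp]
  have hxmem : l x ≤ (p.support.map l).foldr max 0 :=
    le_foldr_max (List.mem_map_of_mem (f := l) p.end_mem_support)
  rcases H x hxu with h | ⟨c, hc, huniq, hle⟩
  · exact h.trans hxmem
  · obtain ⟨w, hxw, q, hq⟩ := Walk.exists_eq_cons_of_ne hxy p.reverse
    have hwc : w = c := huniq w hxw.symm
    have hwmem : w ∈ p.support := by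
      have : w ∈ p.reverse.support := by
        rw [hq, Walk.support_cons]
        exact List.mem_cons_of_mem _ q.start_mem_support
      rwa [Walk.support_reverse, List.mem_reverse] at this
    have hcle : l c ≤ (p.support.map l).foldr max 0 := by
      rw [← hwc]
      exact le_foldr_max (List.mem_map_of_mem (f := l) hwmem)
    exact hle.trans (max_le hcle hxmem)

/-- Structural lemma: if every vertex of degree ≥ 2 is `u` or `v`, and
`l u ≤ l v`, then the hypothesis of `key` holds for `u`. -/
lemma struct (hG : G.IsTree) (l : V → NNReal) (u v : V) (huv : l u ≤ l v)
    (hdeg : ∀ w, DegGe2 G w → w = u ∨ w = v) (x : V) (hx : x ≠ u) :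
    treeDist hG l u x ≤ l x ∨
      ∃ c, G.Adj c x ∧ (∀ c', G.Adj c' x → c' = c) ∧
        treeDist hG l u x ≤ max (l c) (l x) := by
  obtain ⟨p, hp⟩ := (hG.existsUnique_path u x).exists
  rw [treeDist_eq hG l (Ne.symm hx) p hp]
  obtain ⟨b, hub, q, rfl⟩ := Walk.exists_eq_cons_of_ne (Ne.symm hx) p
  have hnodup : u ∉ q.support ∧ q.support.Nodup := by
    have := hp.support_nodup
    rw [Walk.support_cons] at this
    exact List.nodup_cons.mp this
  cases q with
  | nil =>
    -- the path is the single edge u - x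
    by_cases hxv : x = v
    · left
      simp only [Walk.support_cons, Walk.support_nil, List.map_cons, List.map_nil,
        List.foldr_cons, List.foldr_nil]
      have h1 : l u ≤ l x := by rw [hxv]; exact huv
      simp [max_le_iff, h1]
    · right
      refine ⟨u, hub, ?_, ?_⟩
      · intro c' hc'
        by_contra hc'u
        rcases hdeg x ⟨c', u, hc'u, hc'.symm, hub.symm⟩ with h | h
        · exact hx h
        · exact hxv h
      · simp only [Walk.support_cons, Walk.support_nil, List.map_cons, List.map_nil,
          List.foldr_cons, List.foldr_nil]
        simp [max_le_iff, le_max_iff]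
  | cons hbc r =>
    rename_i c
    have hu_notin := hnodup.1
    have hb_notin : b ∉ r.support := by
      have := hnodup.2
      rw [Walk.support_cons] at this
      exact (List.nodup_cons.mp this).1
    have huc : u ≠ c := by
      intro h
      apply hu_notin
      rw [Walk.support_cons]
      exact List.mem_cons_of_mem _ (by rw [h]; exact r.start_mem_support)
    have hbu : b ≠ u := by
      intro h
      apply hu_notin
      rw [Walk.support_cons, ← h]
      exact List.mem_cons_self
    have hbv : b = v := (hdeg b ⟨u, c, huc, hub.symm, hbc⟩).resolve_left hbu
    cases r with
    | nil =>
      -- the path is u - b - x with b = v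
      have hxb : x ≠ b := by
        intro h
        apply hb_notin
        rw [Walk.support_nil]
        simp [← h]
      right
      refine ⟨b, hbc, ?_, ?_⟩
      · intro c' hc'
        by_contra hc'b
        rcases hdeg x ⟨c', b, hc'b, hc'.symm, hbc.symm⟩ with h | h
        · exact hx h
        · exact hxb (h.trans hbv.symm)
      · simp only [Walk.support_cons, Walk.support_nil, List.map_cons, List.map_nil,
          List.foldr_cons, List.foldr_nil]
        have h1 : l u ≤ l b := by rw [hbv]; exact huv
        simp [max_le_iff, le_max_iff, h1]
    | cons hcd s =>
      rename_i d
      exfalso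
      have hbd : b ≠ d := by
        intro h
        apply hb_notin
        rw [Walk.support_cons]
        exact List.mem_cons_of_mem _ (by rw [h]; exact s.start_mem_support)
      have hcu : c ≠ u := fun h => huc h.symm
      have hcv : c ≠ v := by
        intro h
        apply hb_notin
        rw [Walk.support_cons, hbv, h]
        exact List.mem_cons_self
      rcases hdeg c ⟨b, d, hbd, hbc.symm, hcd⟩ with h | h
      · exact hcu h
      · exact hcv h

end Aux

theorem stmt_10 {V : Type*} {G : SimpleGraph V} (hG : G.IsTree)
    (htwo : ∀ u v w : V, DegGe2 G u → DegGe2 G v → DegGe2 G w →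
        u = v ∨ v = w ∨ u = w)
    (l : V → NNReal) (hl : Nondeg G l) :
    (∃ x₀ : V, ∀ x y : V, x ≠ y → treeDist hG l x₀ x ≤ treeDist hG l y x) ∧
      (∀ u v : V, u ≠ v → DegGe2 G u → DegGe2 G v → l u ≤ l v →
        ∀ x y : V, x ≠ y → treeDist hG l u x ≤ treeDist hG l y x) ∧
      ((∀ w : V, ¬ DegGe2 G w) →
        ∀ x₀ x y : V, x ≠ y → treeDist hG l x₀ x ≤ treeDist hG l y x) := by
  have key2 : ∀ u v : V, u ≠ v → DegGe2 G u → DegGe2 G v → l u ≤ l v →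
      ∀ x y : V, x ≠ y → treeDist hG l u x ≤ treeDist hG l y x := by
    intro u v huv hu hv hlv
    refine key hG l u (struct hG l u v hlv ?_)
    intro w hw
    rcases htwo u v w hu hv hw with h | h | h
    · exact absurd h huv
    · exact Or.inr h.symm
    · exact Or.inl h.symm
  have key3 : (∀ w : V, ¬ DegGe2 G w) →
      ∀ x₀ x y : V, x ≠ y → treeDist hG l x₀ x ≤ treeDist hG l y x := by
    intro hno x₀
    exact key hG l x₀ (struct hG l x₀ x₀ le_rfl (fun w hw => absurd hw (hno w)))
  refine ⟨?_, key2, key3⟩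
  by_cases h : ∃ w, DegGe2 G w
  · obtain ⟨u, hu⟩ := h
    by_cases h2 : ∃ w, w ≠ u ∧ DegGe2 G w
    · obtain ⟨v, hvu, hv⟩ := h2
      rcases le_total (l u) (l v) with hle | hle
      · exact ⟨u, key2 u v hvu.symm hu hv hle⟩
      · exact ⟨v, key2 v u hvu hv hu hle⟩
    · refine ⟨u, key hG l u (struct hG l u u le_rfl ?_)⟩
      intro w hw
      left
      by_contra hwu
      exact h2 ⟨w, hwu, hw⟩
  · have : Nonempty V := hG.isConnected.nonempty
    exact ⟨Classical.arbitrary V, key3 (fun w hw => h ⟨w, hw⟩) _⟩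
end
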